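/- For the classical principal series shift-operator action of sl(n) defined above, [E_i, F_{i'}] = δ_{i,i'} H_i as operators on functions of the variables u_{jk}. -/

import Mathlib

noncomputable section
open Finset

/-- The variable `u_{p,q}`, with the convention that `u_{p,q} = 0` unless
`1 ≤ p < q ≤ n` (in particular `u_{0,j} = u_{k,k} = 0`). -/
def mval (n : ℕ) (u : ℕ × ℕ → ℂ) (p q : ℕ) : ℂ :=
  if 1 ≤ p ∧ p < q ∧ q ≤ n then u (p, q) else 0

/-- The unit shift vector in the coordinate `u_{p,q}`; it vanishes (the shift is
non-existent) unless `1 ≤ p < q ≤ n`. -/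
def uvec (n : ℕ) (p q : ℕ) : ℕ × ℕ → ℂ :=
  fun x => if x = (p, q) ∧ 1 ≤ p ∧ p < q ∧ q ≤ n then 1 else 0

/-- The shift vector `e_{E_i}^k`: shifts `u_{k-1,i+k-1}` by `+1`, `u_{k-1,i+k}` by `-1`,
`u_{k,i+k-1}` by `-1`, `u_{k,i+k}` by `+1`. -/
def eShift (n i k : ℕ) : ℕ × ℕ → ℂ :=
  uvec n (k - 1) (i + k - 1) - uvec n (k - 1) (i + k) - uvec n k (i + k - 1) + uvec n k (i + k)

/-- The shift vector `e_{F_i}^k`: shifts `u_{k-1,i-1}` by `-1`, `u_{k-1,i}` by `+1`,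
`u_{k,i}` by `+1`, `u_{k,i+1}` by `-1`. -/
def fShift (n i k : ℕ) : ℕ × ℕ → ℂ :=
  uvec n (k - 1) i + uvec n k i - uvec n (k - 1) (i - 1) - uvec n k (i + 1)

/-- The coefficient `E_i^k(u) = 1 + Σ_{j=k}^{n-i} u_{j,i+j}`. -/
def Ecoef (n i k : ℕ) (u : ℕ × ℕ → ℂ) : ℂ :=
  1 + ∑ j ∈ Icc k (n - i), mval n u j (i + j)

/-- The coefficient `F_i^k(u) = 1 + Σ_{j=k}^{i} u_{j,i} - Σ_{j=i+1}^{n} u_{i,j} + 2λ_i`. -/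
def Fcoef (n i k : ℕ) (lam : ℂ) (u : ℕ × ℕ → ℂ) : ℂ :=
  1 + ∑ j ∈ Icc k i, mval n u j i - ∑ j ∈ Icc (i + 1) n, mval n u i j + 2 * lam

/-- The coefficient
`h_i(u) = Σ_{j=1}^{i-1} u_{j,i} - Σ_{j=i+1}^{n} u_{i,j} - Σ_{j=1}^{n-i} u_{j,i+j} + 2λ_i`. -/
def Hcoef (n i : ℕ) (lam : ℂ) (u : ℕ × ℕ → ℂ) : ℂ :=
  ∑ j ∈ Icc 1 (i - 1), mval n u j i - ∑ j ∈ Icc (i + 1) n, mval n u i j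
    - ∑ j ∈ Icc 1 (n - i), mval n u j (i + j) + 2 * lam

/-- The shift operator `E_i·f(u) = Σ_{k=1}^{n-i} E_i^k(u) f(u + e_{E_i}^k)`. -/
def Eop (n i : ℕ) (f : (ℕ × ℕ → ℂ) → ℂ) : (ℕ × ℕ → ℂ) → ℂ :=
  fun u => ∑ k ∈ Icc 1 (n - i), Ecoef n i k u * f (u + eShift n i k)

/-- The shift operator `F_i·f(u) = Σ_{k=1}^{i} F_i^k(u) f(u + e_{F_i}^k)`. -/
def Fop (n i : ℕ) (lam : ℂ) (f : (ℕ × ℕ → ℂ) → ℂ) : (ℕ × ℕ → ℂ) → ℂ :=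
  fun u => ∑ k ∈ Icc 1 i, Fcoef n i k lam u * f (u + fShift n i k)

/-- The multiplication operator `H_i·f(u) = h_i(u) f(u)`. -/
def Hop (n i : ℕ) (lam : ℂ) (f : (ℕ × ℕ → ℂ) → ℂ) : (ℕ × ℕ → ℂ) → ℂ :=
  fun u => Hcoef n i lam u * f u

/-- The Cartan matrix of type `A_{n-1}`. -/
def cartan (i j : ℕ) : ℂ :=
  if i = j then 2 else if i + 1 = j ∨ j + 1 = i then -1 else 0

/-!
Expanding both composites, the `(k, l)` terms of `E_i F_{i'}` and of `F_{i'} E_i` evaluate `f` at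
the same point `u + e_{E_i}^k + e_{F_{i'}}^l`; their coefficients differ only because each shift
moves the other operator's coefficient. Counting the shifted variables in each coefficient shows
that this move vanishes unless `k = l`, where it is `δ_{i+k,i'} - δ_{i+k,i'+1}` for both. Hence
the commutator is
`Σ_k (δ_{i+k,i'} - δ_{i+k,i'+1}) (E_i^k - F_{i'}^k)(u) f(u + e_{E_i}^k + e_{F_{i'}}^k)`.
For `i > i'` every coefficient vanishes. For `i' = i + a` with `a ≥ 1` the terms `k = a` and
`k = a + 1` cancel, since neither `e_{E_i}^k + e_{F_{i'}}^k` nor `E_i^k - F_{i'}^k` changes from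
`k = a` to `k = a + 1`. For `i = i'` only `k = 1` survives; there the two shifts cancel and
`F_i^1 - E_i^1 = h_i`.
-/

lemma mval_add (n : ℕ) (u v : ℕ × ℕ → ℂ) (p q : ℕ) :
    mval n (u + v) p q = mval n u p q + mval n v p q := by
  unfold mval
  split_ifs <;> simp

lemma mval_sub (n : ℕ) (u v : ℕ × ℕ → ℂ) (p q : ℕ) :
    mval n (u - v) p q = mval n u p q - mval n v p q := by
  unfold mval
  split_ifs <;> simp

lemma sum_mval_uvec_fst (n p q : ℕ) (s : Finset ℕ) (c : ℕ → ℕ) :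
    ∑ j ∈ s, mval n (uvec n p q) j (c j)
      = if p ∈ s ∧ c p = q ∧ 1 ≤ p ∧ p < q ∧ q ≤ n then 1 else 0 := by
  have h : ∀ j, mval n (uvec n p q) j (c j)
      = if p = j then (if c j = q ∧ 1 ≤ p ∧ p < q ∧ q ≤ n then 1 else 0) else 0 := by
    intro j
    unfold mval uvec
    split_ifs <;> grind
  simp only [h, sum_ite_eq, ite_and]

lemma sum_mval_uvec_snd (n p q r : ℕ) (s : Finset ℕ) :
    ∑ j ∈ s, mval n (uvec n p q) r j
      = if q ∈ s ∧ r = p ∧ 1 ≤ p ∧ p < q ∧ q ≤ n then 1 else 0 := by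
  have h : ∀ j, mval n (uvec n p q) r j
      = if q = j then (if r = p ∧ 1 ≤ p ∧ p < q ∧ q ≤ n then 1 else 0) else 0 := by
    intro j
    unfold mval uvec
    split_ifs <;> grind
  simp only [h, sum_ite_eq, ite_and]

def coefShift (i i' k : ℕ) : ℂ :=
  (if i + k = i' then 1 else 0) - if i + k = i' + 1 then 1 else 0

/- The last summand appears because for `i = 1` the shifted variable `u_{k,i+k-1}` is the
nonexistent `u_{k,k}`; it cancels against `sum_mval_eShift_row` in `Fcoef_add_eShift`. -/
lemma sum_mval_eShift_col (n i i' k l : ℕ) (hi : 1 ≤ i)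
    (hk : k ∈ Icc 1 (n - i)) (hl : l ∈ Icc 1 i') :
    ∑ j ∈ Icc l i', mval n (eShift n i k) j i'
      = (if i + k = i' ∧ k = l then 1 else 0) - (if i + k = i' + 1 ∧ k = l then 1 else 0)
        + if i = 1 ∧ k = i' then 1 else 0 := by
  rw [mem_Icc] at hk hl
  simp only [eShift, mval_add, mval_sub, sum_add_distrib, sum_sub_distrib,
    sum_mval_uvec_fst, mem_Icc]
  split_ifs <;> first | omega | norm_num

lemma sum_mval_eShift_row (n i i' k : ℕ) (hi : 1 ≤ i) (hk : k ∈ Icc 1 (n - i)) :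
    ∑ j ∈ Icc (i' + 1) n, mval n (eShift n i k) i' j = if i = 1 ∧ k = i' then 1 else 0 := by
  rw [mem_Icc] at hk
  simp only [eShift, mval_add, mval_sub, sum_add_distrib, sum_sub_distrib,
    sum_mval_uvec_snd, mem_Icc]
  split_ifs <;> first | omega | norm_num

lemma sum_mval_fShift_diag (n i i' k l : ℕ) (hi : 1 ≤ i) (hi' : i' ≤ n - 1) (hk : 1 ≤ k)
    (hl : l ∈ Icc 1 i') :
    ∑ j ∈ Icc k (n - i), mval n (fShift n i' l) j (i + j)
      = if k = l then coefShift i i' k else 0 := by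
  rw [mem_Icc] at hl
  simp only [fShift, coefShift, mval_add, mval_sub, sum_add_distrib, sum_sub_distrib,
    sum_mval_uvec_fst, mem_Icc]
  split_ifs <;> first | omega | norm_num

lemma Fcoef_add_eShift (n i i' k l : ℕ) (lam : ℂ) (u : ℕ × ℕ → ℂ) (hi : 1 ≤ i)
    (hk : k ∈ Icc 1 (n - i)) (hl : l ∈ Icc 1 i') :
    Fcoef n i' l lam (u + eShift n i k)
      = Fcoef n i' l lam u + if k = l then coefShift i i' k else 0 := by
  simp only [Fcoef, mval_add, sum_add_distrib, sum_mval_eShift_col n i i' k l hi hk hl,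
    sum_mval_eShift_row n i i' k hi hk, coefShift]
  split_ifs <;> first | omega | ring

lemma Ecoef_add_fShift (n i i' k l : ℕ) (u : ℕ × ℕ → ℂ) (hi : 1 ≤ i) (hi' : i' ≤ n - 1)
    (hk : 1 ≤ k) (hl : l ∈ Icc 1 i') :
    Ecoef n i k (u + fShift n i' l) = Ecoef n i k u + if k = l then coefShift i i' k else 0 := by
  simp only [Ecoef, mval_add, sum_add_distrib, sum_mval_fShift_diag n i i' k l hi hi' hk hl]
  ring

lemma Eop_Fop_sub_Fop_Eop (n i i' : ℕ) (lam : ℂ) (f : (ℕ × ℕ → ℂ) → ℂ) (u : ℕ × ℕ → ℂ)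
    (hi : 1 ≤ i) (hi' : i' ≤ n - 1) :
    Eop n i (Fop n i' lam f) u - Fop n i' lam (Eop n i f) u
      = ∑ k ∈ Icc 1 (n - i) ∩ Icc 1 i', coefShift i i' k
          * ((Ecoef n i k u - Fcoef n i' k lam u) * f (u + eShift n i k + fShift n i' k)) := by
  have hterm : ∀ k ∈ Icc 1 (n - i), ∀ l ∈ Icc 1 i',
      Ecoef n i k u
          * (Fcoef n i' l lam (u + eShift n i k) * f (u + eShift n i k + fShift n i' l))
        - Fcoef n i' l lam u
          * (Ecoef n i k (u + fShift n i' l) * f (u + fShift n i' l + eShift n i k))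
      = if k = l then coefShift i i' k
          * ((Ecoef n i k u - Fcoef n i' k lam u) * f (u + eShift n i k + fShift n i' k))
        else 0 := by
    intro k hk l hl
    rw [Fcoef_add_eShift n i i' k l lam u hi hk hl,
      Ecoef_add_fShift n i i' k l u hi hi' (mem_Icc.mp hk).1 hl, add_right_comm u (fShift n i' l)]
    split_ifs with hkl
    · subst hkl
      ring
    · ring
  simp only [Eop, Fop, mul_sum]
  rw [sum_comm (s := Icc 1 i'), ← sum_sub_distrib, ← sum_ite_mem]
  refine sum_congr rfl fun k hk => ?_
  rw [← sum_sub_distrib, sum_congr rfl (hterm k hk), sum_ite_eq]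

lemma sum_coefShift_mul (i a : ℕ) (s : Finset ℕ) (g : ℕ → ℂ) :
    ∑ k ∈ s, coefShift i (i + a) k * g k
      = (if a ∈ s then g a else 0) - if a + 1 ∈ s then g (a + 1) else 0 := by
  have h : ∀ k, coefShift i (i + a) k * g k
      = (if a = k then g k else 0) - if a + 1 = k then g k else 0 := by
    intro k
    simp only [coefShift]
    split_ifs <;> first | omega | ring
  simp only [h, sum_sub_distrib, sum_ite_eq]

lemma coefShift_eq_zero_of_lt (i i' k : ℕ) (h : i' < i) (hk : 1 ≤ k) : coefShift i i' k = 0 := by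
  simp only [coefShift]
  split_ifs <;> first | omega | ring

lemma eShift_add_fShift_succ (n i a : ℕ) :
    eShift n i a + fShift n (i + a) a = eShift n i (a + 1) + fShift n (i + a) (a + 1) := by
  simp only [eShift, fShift, Nat.add_sub_cancel, ← add_assoc]
  abel

lemma Ecoef_sub_Fcoef_succ (n i a : ℕ) (lam : ℂ) (u : ℕ × ℕ → ℂ) (ha : a ≤ n - i) :
    Ecoef n i a u - Fcoef n (i + a) a lam u
      = Ecoef n i (a + 1) u - Fcoef n (i + a) (a + 1) lam u := by
  have hE : Ecoef n i a u = mval n u a (i + a) + Ecoef n i (a + 1) u := by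
    rw [Ecoef, Ecoef, ← insert_Icc_add_one_left_eq_Icc ha, sum_insert (by simp)]
    ring
  have hF : Fcoef n (i + a) a lam u = mval n u a (i + a) + Fcoef n (i + a) (a + 1) lam u := by
    rw [Fcoef, Fcoef, ← insert_Icc_add_one_left_eq_Icc (Nat.le_add_left a i), sum_insert (by simp)]
    ring
  rw [hE, hF]
  ring

lemma eShift_one_add_fShift_one (n i : ℕ) : eShift n i 1 + fShift n i 1 = 0 := by
  have h : ∀ q, uvec n 0 q = 0 := by
    intro q
    funext x
    simp [uvec]
  simp only [eShift, fShift, Nat.sub_self, Nat.add_sub_cancel, h]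
  abel

lemma Fcoef_one_sub_Ecoef_one (n i : ℕ) (lam : ℂ) (u : ℕ × ℕ → ℂ) (hi : 1 ≤ i) :
    Fcoef n i 1 lam u - Ecoef n i 1 u = Hcoef n i lam u := by
  obtain ⟨m, rfl⟩ := Nat.exists_eq_add_of_le' hi
  have hdiag : mval n u (m + 1) (m + 1) = 0 := by simp [mval]
  simp only [Fcoef, Ecoef, Hcoef, sum_Icc_succ_top hi, Nat.add_sub_cancel, hdiag]
  ring

theorem E_F_commutator_general (n i i' : ℕ)
    (hi : 1 ≤ i) (hi2' : i' ≤ n - 1)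
    (lam : ℕ → ℂ) (f : (ℕ × ℕ → ℂ) → ℂ) (u : ℕ × ℕ → ℂ) :
    Eop n i (Fop n i' (lam i') f) u - Fop n i' (lam i') (Eop n i f) u
      = if i = i' then Hop n i (lam i) f u else 0 := by
  rw [Eop_Fop_sub_Fop_Eop n i i' (lam i') f u hi hi2']
  rcases le_or_gt i i' with hle | hlt
  · obtain ⟨a, rfl⟩ := Nat.exists_eq_add_of_le hle
    have hsucc : a + 1 ∈ Icc 1 (n - i) ∩ Icc 1 (i + a) := by
      simp only [mem_inter, mem_Icc]
      omega
    rw [sum_coefShift_mul, if_pos hsucc]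
    rcases Nat.eq_zero_or_pos a with rfl | ha
    · simp only [add_zero, zero_add, if_true, add_assoc, eShift_one_add_fShift_one, Hop,
        ← Fcoef_one_sub_Ecoef_one n i (lam i) u hi]
      rw [if_neg (by simp)]
      ring
    · rw [if_pos (by simp only [mem_inter, mem_Icc]; omega), if_neg (by omega), add_assoc,
        add_assoc, eShift_add_fShift_succ, Ecoef_sub_Fcoef_succ n i a _ u (by omega), sub_self]
  · rw [if_neg hlt.ne', sum_eq_zero]
    intro k hk
    rw [coefShift_eq_zero_of_lt i i' k hlt (mem_Icc.mp (mem_inter.mp hk).2).1, zero_mul]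

/-- `[E_i, F_{i'}] = δ_{i,i'} H_i` for the classical principal series shift-operator
action of `sl(n)`. -/
theorem E_F_commutator (n i i' : ℕ) (hn : 2 ≤ n)
    (hi : 1 ≤ i) (hi' : i ≤ n - 1) (hi2 : 1 ≤ i') (hi2' : i' ≤ n - 1)
    (lam : ℕ → ℂ) (f : (ℕ × ℕ → ℂ) → ℂ) (u : ℕ × ℕ → ℂ) :
    Eop n i (Fop n i' (lam i') f) u - Fop n i' (lam i') (Eop n i f) u
      = if i = i' then Hop n i (lam i) f u else 0 :=
  E_F_commutator_general n i i' hi hi2' lam f u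

end
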